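/- arXiv:2602.12657 — 3 statements merged into one kernel-verified Lean document; each statement's English description precedes it below -/
import Mathlib

section
/- For all real numbers p ≥ 1, s > 0 and ε > 0, the following inequality holds: |√((s(p−1) + ε²)/(s + ε²)) − √(p−1)| ≤ ε·|p−2|·(s + ε²)^{−1/2}. -/
/-! The quotient is `(p - 1) + ε²(2 - p)/(s + ε²)`, so the two radicands differ by
`ε²|p - 2|/(s + ε²)`. Rationalising, `|√x - √y| = |x - y| / (√x + √y)`, and the denominator is
at least `√x ≥ ε / √(s + ε²)` because `s(p - 1) ≥ 0`. -/

namespace Real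

lemma abs_sqrt_sub_sqrt_le_div {x y a : ℝ} (hy : 0 ≤ y) (ha : 0 < a) (hax : a ≤ √x) :
    |√x - √y| ≤ |x - y| / a := by
  have hx : 0 ≤ x := by
    by_contra! hx
    linarith [sqrt_eq_zero_of_nonpos hx.le]
  rw [le_div_iff₀ ha]
  calc |√x - √y| * a ≤ |√x - √y| * (√x + √y) := by gcongr; linarith [sqrt_nonneg y]
    _ = |(√x + √y) * (√x - √y)| := by
        rw [abs_mul, abs_of_nonneg (by positivity : 0 ≤ √x + √y), mul_comm]
    _ = |x - y| := by rw [← mul_self_sub_mul_self, mul_self_sqrt hx, mul_self_sqrt hy]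

end Real

lemma div_sub_eq_sq_mul_div (p s ε : ℝ) (hd : s + ε ^ 2 ≠ 0) :
    (s * (p - 1) + ε ^ 2) / (s + ε ^ 2) - (p - 1) = ε ^ 2 * (2 - p) / (s + ε ^ 2) := by
  field_simp
  ring

lemma div_sqrt_le_sqrt_div {p s ε : ℝ} (hp : 1 ≤ p) (hs : 0 ≤ s) (hε : 0 ≤ ε) :
    ε / √(s + ε ^ 2) ≤ √((s * (p - 1) + ε ^ 2) / (s + ε ^ 2)) := by
  calc ε / √(s + ε ^ 2) = √(ε ^ 2 / (s + ε ^ 2)) := by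
        rw [Real.sqrt_div' _ (by positivity), Real.sqrt_sq hε]
    _ ≤ _ := by gcongr; nlinarith

/-- Scalar estimate behind (4.7):
`|√((s(p-1)+ε²)/(s+ε²)) - √(p-1)| ≤ ε |p-2| (s+ε²)^{-1/2}`. -/
theorem stmt5 (p s ε : ℝ) (hp : 1 ≤ p) (hs : 0 < s) (hε : 0 < ε) :
    |Real.sqrt ((s * (p - 1) + ε ^ 2) / (s + ε ^ 2)) - Real.sqrt (p - 1)|
      ≤ ε * |p - 2| * (s + ε ^ 2) ^ (-(1 / 2) : ℝ) := by
  have hd : 0 < s + ε ^ 2 := by positivity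
  calc _ ≤ |(s * (p - 1) + ε ^ 2) / (s + ε ^ 2) - (p - 1)| / (ε / √(s + ε ^ 2)) :=
        Real.abs_sqrt_sub_sqrt_le_div (by linarith) (by positivity)
          (div_sqrt_le_sqrt_div hp hs.le hε.le)
    _ = ε * |p - 2| * (√(s + ε ^ 2))⁻¹ := by
        rw [div_sub_eq_sq_mul_div p s ε hd.ne', abs_div, abs_mul, abs_of_pos hd,
          abs_of_pos (by positivity : 0 < ε ^ 2), abs_sub_comm]
        field_simp
        rw [Real.sq_sqrt hd.le]
    _ = _ := by rw [Real.rpow_neg hd.le, Real.sqrt_eq_rpow]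
end

section
/- Let p ≥ 1, ε > 0, ξ ∈ ℝⁿ with ξ ≠ 0, and P_ξ = (ξ⊗ξ)/|ξ|². Then, in the operator norm on n×n real matrices (induced by the Euclidean norm on ℝⁿ), ‖(I + (√((|ξ|²(p−1) + ε²)/(|ξ|² + ε²)) − 1)·P_ξ) − (I + (√(p−1) − 1)·P_ξ)‖ ≤ ε·|p−2|·(|ξ|² + ε²)^{−1/2}. -/
/-!
Both matrices have the form `1 + t • P_ξ`, so their difference is `c • P_ξ`, where `c` is the
difference of the two square roots, and `‖P_ξ‖ ≤ 1` by Cauchy–Schwarz. With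
`a = (|ξ|²(p-1) + ε²)/(|ξ|² + ε²)` one has `a - (p-1) = ε²(2-p)/(|ξ|² + ε²)` and
`a ≥ ε²/(|ξ|² + ε²)`, so `|√a - √(p-1)| ≤ |a - (p-1)|/√a` gives the bound.
-/

open Matrix WithLp

lemma abs_sqrt_sub_sqrt_le_div {a b : ℝ} (ha : 0 < a) (hb : 0 ≤ b) :
    |√a - √b| ≤ |a - b| / √a := by
  have hsa : 0 < √a := Real.sqrt_pos.mpr ha
  rw [le_div_iff₀ hsa]
  have hdiff : |a - b| = |√a - √b| * (√a + √b) := by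
    rw [← abs_of_nonneg (by positivity : 0 ≤ √a + √b), ← abs_mul]
    congr 1
    nlinarith [Real.sq_sqrt ha.le, Real.sq_sqrt hb]
  rw [hdiff]
  gcongr
  exact le_add_of_nonneg_right (Real.sqrt_nonneg b)

lemma norm_toEuclideanCLM_vecMulVec_le {n : Type*} [Fintype n] [DecidableEq n] (u v : n → ℝ) :
    ‖toEuclideanCLM (𝕜 := ℝ) (vecMulVec u v)‖ ≤ ‖toLp 2 u‖ * ‖toLp 2 v‖ := by
  refine ContinuousLinearMap.opNorm_le_bound _ (by positivity) fun w => ?_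
  have hw : toEuclideanCLM (𝕜 := ℝ) (vecMulVec u v) w = (v ⬝ᵥ ofLp w) • toLp 2 u := by
    ext i
    simp [vecMulVec_mulVec, mul_comm]
  have hdot : v ⬝ᵥ ofLp w = inner ℝ (toLp 2 v) w := by
    simp [EuclideanSpace.inner_eq_star_dotProduct, dotProduct_comm]
  rw [hw, norm_smul, hdot, Real.norm_eq_abs]
  calc |inner ℝ (toLp 2 v) w| * ‖toLp 2 u‖ ≤ (‖toLp 2 v‖ * ‖w‖) * ‖toLp 2 u‖ := by
        gcongr; exact abs_real_inner_le_norm _ _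
    _ = _ := by ring

lemma norm_toEuclideanCLM_rankOneProjection_le_one {n : Type*} [Fintype n] [DecidableEq n]
    (ξ : n → ℝ) :
    ‖toEuclideanCLM (𝕜 := ℝ) ((∑ i, ξ i ^ 2)⁻¹ • vecMulVec ξ ξ)‖ ≤ 1 := by
  have hnorm : ‖toLp 2 ξ‖ ^ 2 = ∑ i, ξ i ^ 2 := by simp [EuclideanSpace.real_norm_sq_eq]
  rw [map_smul, norm_smul, Real.norm_eq_abs, ← hnorm, abs_of_nonneg (by positivity)]
  calc (‖toLp 2 ξ‖ ^ 2)⁻¹ * ‖toEuclideanCLM (𝕜 := ℝ) (vecMulVec ξ ξ)‖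
      ≤ (‖toLp 2 ξ‖ ^ 2)⁻¹ * (‖toLp 2 ξ‖ ^ 2) := by
        gcongr; simpa [sq] using norm_toEuclideanCLM_vecMulVec_le ξ ξ
    _ ≤ 1 := inv_mul_le_one_of_le₀ le_rfl (by positivity)

lemma abs_sqrt_regularized_sub_sqrt_le {s p ε : ℝ} (hs : 0 ≤ s) (hp : 1 ≤ p) (hε : 0 < ε) :
    |√((s * (p - 1) + ε ^ 2) / (s + ε ^ 2)) - √(p - 1)| ≤ ε * |p - 2| / √(s + ε ^ 2) := by
  have hN : 0 < s + ε ^ 2 := by positivity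
  set a := (s * (p - 1) + ε ^ 2) / (s + ε ^ 2)
  have hlow : ε / √(s + ε ^ 2) ≤ √a := by
    have hεN : ε / √(s + ε ^ 2) = √(ε ^ 2 / (s + ε ^ 2)) := by
      rw [Real.sqrt_div' _ hN.le, Real.sqrt_sq hε.le]
    rw [hεN]
    gcongr
    simp only [a]
    gcongr
    nlinarith [mul_nonneg hs (sub_nonneg.2 hp)]
  have hgap : |a - (p - 1)| = ε ^ 2 * |p - 2| / (s + ε ^ 2) := by
    have : a - (p - 1) = ε ^ 2 * (2 - p) / (s + ε ^ 2) := by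
      simp only [a]; field_simp; ring
    rw [this, abs_div, abs_mul, abs_of_pos hN, abs_sq, abs_sub_comm]
  have ha : 0 < a :=
    Real.sqrt_pos.mp ((by positivity : 0 < ε / √(s + ε ^ 2)).trans_le hlow)
  calc |√a - √(p - 1)| ≤ |a - (p - 1)| / √a := abs_sqrt_sub_sqrt_le_div ha (sub_nonneg.2 hp)
    _ ≤ ε ^ 2 * |p - 2| / (s + ε ^ 2) / (ε / √(s + ε ^ 2)) := by
        rw [hgap]; gcongr
    _ = ε * |p - 2| / √(s + ε ^ 2) := by
        field_simp
        rw [Real.sq_sqrt hN.le]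

theorem stmt6_general (n : ℕ) (p ε : ℝ) (hp : 1 ≤ p) (hε : 0 < ε)
    (ξ : Fin n → ℝ) :
    let nsq : ℝ := ∑ i, (ξ i) ^ 2
    let P : Matrix (Fin n) (Fin n) ℝ := nsq⁻¹ • Matrix.vecMulVec ξ ξ
    let B₁ : Matrix (Fin n) (Fin n) ℝ :=
      1 + (Real.sqrt ((nsq * (p - 1) + ε ^ 2) / (nsq + ε ^ 2)) - 1) • P
    let B₀ : Matrix (Fin n) (Fin n) ℝ := 1 + (Real.sqrt (p - 1) - 1) • P
    ‖Matrix.toEuclideanCLM (𝕜 := ℝ) B₁ - Matrix.toEuclideanCLM (𝕜 := ℝ) B₀‖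
      ≤ ε * |p - 2| * (nsq + ε ^ 2) ^ (-(1 / 2) : ℝ) := by
  intro nsq P B₁ B₀
  set c := √((nsq * (p - 1) + ε ^ 2) / (nsq + ε ^ 2)) - √(p - 1)
  have hB : B₁ - B₀ = c • P := by
    simp only [B₁, B₀, c, add_sub_add_left_eq_sub, ← sub_smul, sub_sub_sub_cancel_right]
  have hrpow : (nsq + ε ^ 2) ^ (-(1 / 2) : ℝ) = (√(nsq + ε ^ 2))⁻¹ := by
    rw [Real.rpow_neg (by positivity), Real.sqrt_eq_rpow]
  calc ‖toEuclideanCLM (𝕜 := ℝ) B₁ - toEuclideanCLM (𝕜 := ℝ) B₀‖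
      = |c| * ‖toEuclideanCLM (𝕜 := ℝ) P‖ := by
        rw [← map_sub, hB, map_smul, norm_smul, Real.norm_eq_abs]
    _ ≤ |c| * 1 := by gcongr; exact norm_toEuclideanCLM_rankOneProjection_le_one ξ
    _ ≤ ε * |p - 2| * (nsq + ε ^ 2) ^ (-(1 / 2) : ℝ) := by
        rw [mul_one, hrpow, ← div_eq_mul_inv]
        exact abs_sqrt_regularized_sub_sqrt_le (by positivity) hp hε

/-- Matrix version of the regularization estimate (4.6)–(4.7): in the operator
norm induced by the Euclidean norm,
`‖Ã_ε(ξ)^{1/2} - Ã_0(ξ)^{1/2}‖ ≤ ε |p-2| (|ξ|²+ε²)^{-1/2}`. -/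
theorem stmt6 (n : ℕ) (p ε : ℝ) (hp : 1 ≤ p) (hε : 0 < ε)
    (ξ : Fin n → ℝ) (hξ : ξ ≠ 0) :
    let nsq : ℝ := ∑ i, (ξ i) ^ 2
    let P : Matrix (Fin n) (Fin n) ℝ := nsq⁻¹ • Matrix.vecMulVec ξ ξ
    let B₁ : Matrix (Fin n) (Fin n) ℝ :=
      1 + (Real.sqrt ((nsq * (p - 1) + ε ^ 2) / (nsq + ε ^ 2)) - 1) • P
    let B₀ : Matrix (Fin n) (Fin n) ℝ := 1 + (Real.sqrt (p - 1) - 1) • P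
    ‖Matrix.toEuclideanCLM (𝕜 := ℝ) B₁ - Matrix.toEuclideanCLM (𝕜 := ℝ) B₀‖
      ≤ ε * |p - 2| * (nsq + ε ^ 2) ^ (-(1 / 2) : ℝ) :=
  stmt6_general n p ε hp hε ξ
end

section
/- Let 1 < q < 2 and let β satisfy −1/2 < β < q/2 − 1. Then there exist δ > 0 and c > 0 such that for every p ∈ (1, 2) with |p − q| ≤ δ and every s > 0: |s^{p/2−1} − s^{q/2−1}| ≤ c·|p − q|·(1 + s^β). -/
/-!
Writing `s ^ t = exp (t log s)`, the mean value inequality for `exp` gives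
`|s^a - s^b| ≤ |a - b| |log s| max (s^a, s^b)`. As `q/2 - 1` lies strictly between `β` and `0`,
for `p` close to `q` both exponents stay in some `[β + ε, -ε]`, and on that range
`|log s| s^t ≤ ε⁻¹ (1 + s^β)`: the factor `s^{±ε}` absorbs the logarithm at `∞` and at `0`.
-/

open Real

lemma Real.abs_exp_sub_exp_le (x y : ℝ) : |exp x - exp y| ≤ |x - y| * exp (max x y) := by
  wlog h : x ≤ y generalizing x y
  · rw [abs_sub_comm, abs_sub_comm x y, max_comm]
    exact this y x (le_of_not_ge h)
  rw [max_eq_right h, abs_of_nonpos (by simpa using exp_le_exp.2 h),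
    abs_of_nonpos (by linarith)]
  have h_tangent : x - y + 1 ≤ exp (x - y) := add_one_le_exp _
  have h_split : exp (x - y) * exp y = exp x := by rw [← exp_add, sub_add_cancel]
  nlinarith [exp_pos y]

lemma Real.abs_rpow_sub_rpow_le {s : ℝ} (hs : 0 < s) (a b : ℝ) :
    |s ^ a - s ^ b| ≤ |a - b| * (|log s| * max (s ^ a) (s ^ b)) := by
  have h_exp : ∀ t, s ^ t = exp (t * log s) := fun t => by rw [rpow_def_of_pos hs, mul_comm]
  calc |s ^ a - s ^ b| = |exp (a * log s) - exp (b * log s)| := by rw [h_exp, h_exp]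
    _ ≤ |a * log s - b * log s| * exp (max (a * log s) (b * log s)) := abs_exp_sub_exp_le _ _
    _ = |a - b| * (|log s| * max (s ^ a) (s ^ b)) := by
      rw [← sub_mul, abs_mul, exp_monotone.map_max, h_exp, h_exp, mul_assoc]

lemma Real.abs_log_mul_rpow_le {ε β t s : ℝ} (hε : 0 < ε) (hβt : β + ε ≤ t) (ht : t ≤ -ε)
    (hs : 0 < s) : |log s| * s ^ t ≤ ε⁻¹ * (1 + s ^ β) := by
  have hβ : 0 ≤ s ^ β := (rpow_pos_of_pos hs β).le
  rcases le_or_gt 1 s with h1s | hs1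
  · have hlog : log s ≤ s ^ ε / ε := log_le_rpow_div hs.le hε
    calc |log s| * s ^ t ≤ s ^ ε / ε * s ^ t := by
          rw [abs_of_nonneg (log_nonneg h1s)]; gcongr
      _ = ε⁻¹ * s ^ (ε + t) := by rw [rpow_add hs]; ring
      _ ≤ ε⁻¹ * 1 := by gcongr; exact rpow_le_one_of_one_le_of_nonpos h1s (by linarith)
      _ ≤ ε⁻¹ * (1 + s ^ β) := by gcongr; linarith
  · have hlog : log s⁻¹ ≤ s⁻¹ ^ ε / ε := log_le_rpow_div (inv_nonneg.2 hs.le) hε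
    rw [inv_rpow hs.le, ← rpow_neg hs.le] at hlog
    calc |log s| * s ^ t ≤ s ^ (-ε) / ε * s ^ t := by
          rw [abs_of_neg (log_neg hs hs1), ← log_inv]; gcongr
      _ = ε⁻¹ * s ^ (-ε + t) := by rw [rpow_add hs]; ring
      _ ≤ ε⁻¹ * s ^ β := mul_le_mul_of_nonneg_left
          (rpow_le_rpow_of_exponent_ge hs hs1.le (by linarith)) (by positivity)
      _ ≤ ε⁻¹ * (1 + s ^ β) := by gcongr; linarith

theorem stmt18_general (q β : ℝ) (hq2 : q < 2)
    (hβ2 : β < q / 2 - 1) :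
    ∃ δ > 0, ∃ c > 0, ∀ p : ℝ, 1 < p → p < 2 → |p - q| ≤ δ →
      ∀ s : ℝ, 0 < s →
        |s ^ (p / 2 - 1) - s ^ (q / 2 - 1)| ≤ c * |p - q| * (1 + s ^ β) := by
  set δ := min (q / 2 - 1 - β) (-(q / 2 - 1))
  have hδ_pos : 0 < δ := lt_min (by linarith) (by linarith)
  refine ⟨δ, hδ_pos, δ⁻¹, inv_pos.2 hδ_pos, fun p _ _ hpq s hs => ?_⟩
  have h_half : |p / 2 - 1 - (q / 2 - 1)| = |p - q| / 2 := by
    rw [show p / 2 - 1 - (q / 2 - 1) = (p - q) / 2 by ring, abs_div, abs_two]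
  have h_range : ∀ t, |t - (q / 2 - 1)| ≤ δ / 2 → β + δ / 2 ≤ t ∧ t ≤ -(δ / 2) := by
    intro t ht
    have := abs_le.1 ht
    constructor <;> linarith [min_le_left (q / 2 - 1 - β) (-(q / 2 - 1)),
      min_le_right (q / 2 - 1 - β) (-(q / 2 - 1))]
  have h_log_bound : ∀ t, |t - (q / 2 - 1)| ≤ δ / 2 →
      |log s| * s ^ t ≤ (δ / 2)⁻¹ * (1 + s ^ β) :=
    fun t ht => abs_log_mul_rpow_le (half_pos hδ_pos) (h_range t ht).1 (h_range t ht).2 hs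
  have h_max : |log s| * max (s ^ (p / 2 - 1)) (s ^ (q / 2 - 1)) ≤ (δ / 2)⁻¹ * (1 + s ^ β) := by
    rw [mul_max_of_nonneg _ _ (abs_nonneg _)]
    exact max_le (h_log_bound _ (by linarith))
      (h_log_bound _ (by rw [sub_self, abs_zero]; positivity))
  calc |s ^ (p / 2 - 1) - s ^ (q / 2 - 1)|
      ≤ |p / 2 - 1 - (q / 2 - 1)| * (|log s| * max (s ^ (p / 2 - 1)) (s ^ (q / 2 - 1))) :=
        abs_rpow_sub_rpow_le hs _ _
    _ ≤ |p - q| / 2 * ((δ / 2)⁻¹ * (1 + s ^ β)) := by rw [h_half]; gcongr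
    _ = δ⁻¹ * |p - q| * (1 + s ^ β) := by field_simp

/-- Scalar core of estimate (4.1), fast diffusion case: for `1 < q < 2` and
`-1/2 < β < q/2 - 1` there are `δ, c > 0` such that for all `p ∈ (1,2)` with
`|p - q| ≤ δ` and all `s > 0`,
`|s^{p/2-1} - s^{q/2-1}| ≤ c |p - q| (1 + s^β)`. -/
theorem stmt18 (q β : ℝ) (hq1 : 1 < q) (hq2 : q < 2) (hβ1 : -(1 / 2) < β)
    (hβ2 : β < q / 2 - 1) :
    ∃ δ > 0, ∃ c > 0, ∀ p : ℝ, 1 < p → p < 2 → |p - q| ≤ δ →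
      ∀ s : ℝ, 0 < s →
        |s ^ (p / 2 - 1) - s ^ (q / 2 - 1)| ≤ c * |p - q| * (1 + s ^ β) :=
  stmt18_general q β hq2 hβ2
end
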